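/- arXiv:2309.08404 — 3 statements merged into one kernel-verified Lean document; each statement's English description precedes it below -/
import Mathlib

section
/- Let ω ≥ 1 and Λ ≥ 2ω−1 be integers, and let W be the (ω,Λ) base matrix with R = Λ+ω−1 rows and C = Λ columns, W_rc = 1/ω if c ≤ r ≤ c+ω−1 and W_rc = 0 otherwise. For any nonnegative reals ψ₁, …, ψ_Λ, define x̄_r = Σ_{c=1}^Λ W_rc ψ_c for r ∈ [R]. Then (1/Λ) Σ_{c=1}^Λ ψ_c ≤ ⌈Λ/ω⌉ · (ω/Λ) · max_{r ∈ [R]} x̄_r. -/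
open Finset

/-- For the `(ω, Λ)` base matrix `W` (with `R = Λ + ω - 1` rows and
`C = Λ` columns, entries `W r c = 1/ω` if `c ≤ r ≤ c + ω - 1` (one-based) and `0` otherwise),
and any nonnegative reals `ψ₁, …, ψ_Λ`, setting `x̄_r = ∑_c W r c * ψ c`, we have
`(1/Λ) ∑_c ψ c ≤ ⌈Λ/ω⌉ * (ω/Λ) * max_r x̄_r`.  (Indices are zero-based in this
formalization: the band condition `c ≤ r ≤ c + ω - 1` becomes `c ≤ r < c + ω`.) -/
theorem stmt_14
    (ω Λ : ℕ) (hω : 1 ≤ ω) (hΛ : 2 * ω - 1 ≤ Λ)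
    (W : Fin (Λ + ω - 1) → Fin Λ → ℝ)
    (hW : ∀ r c, W r c = if (c : ℕ) ≤ (r : ℕ) ∧ (r : ℕ) < (c : ℕ) + ω then (1 : ℝ) / ω else 0)
    (ψ : Fin Λ → ℝ) (hψ : ∀ c, 0 ≤ ψ c)
    (xbar : Fin (Λ + ω - 1) → ℝ)
    (hxbar : ∀ r, xbar r = ∑ c, W r c * ψ c)
    (hne : (Finset.univ : Finset (Fin (Λ + ω - 1))).Nonempty) :
    (1 / (Λ : ℝ)) * ∑ c, ψ c ≤
      (⌈(Λ : ℝ) / (ω : ℝ)⌉₊ : ℝ) * ((ω : ℝ) / (Λ : ℝ)) *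
        (Finset.univ.sup' hne xbar) := by
  have hΛ1 : 1 ≤ Λ := by omega
  have hΛ0 : (0 : ℝ) < (Λ : ℝ) := by exact_mod_cast hΛ1
  have hω0 : (0 : ℝ) < (ω : ℝ) := by exact_mod_cast hω
  set M := Finset.univ.sup' hne xbar with hM
  have hWnn : ∀ r c, 0 ≤ W r c := by
    intro r c; rw [hW]; split
    · positivity
    · exact le_refl 0
  have hx0 : ∀ r, 0 ≤ xbar r := by
    intro r; rw [hxbar]
    exact Finset.sum_nonneg fun c _ => mul_nonneg (hWnn r c) (hψ c)
  have hxM : ∀ r, xbar r ≤ M := fun r => Finset.le_sup' xbar (mem_univ r)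
  have hM0 : 0 ≤ M := le_trans (hx0 hne.choose) (hxM hne.choose)
  set N := ⌈(Λ : ℝ) / (ω : ℝ)⌉₊ with hN
  have hfib : ∀ c : Fin Λ, (c : ℕ) / ω ∈ Finset.range N := by
    intro c
    rw [Finset.mem_range, hN, Nat.lt_ceil]
    rw [lt_div_iff₀ hω0]
    have h1 : ((c : ℕ) / ω) * ω ≤ (c : ℕ) := Nat.div_mul_le_self _ _
    have h2 : (c : ℕ) < Λ := c.isLt
    have : ((c : ℕ) / ω) * ω < Λ := lt_of_le_of_lt h1 h2
    exact_mod_cast this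
  have key : ∑ c, ψ c ≤ (N : ℝ) * ((ω : ℝ) * M) := by
    calc ∑ c, ψ c
        = ∑ k ∈ Finset.range N,
            ∑ c ∈ Finset.univ.filter (fun c : Fin Λ => (c : ℕ) / ω = k), ψ c := by
          exact (Finset.sum_fiberwise_of_maps_to (fun c _ => hfib c) ψ).symm
      _ ≤ ∑ k ∈ Finset.range N, (ω : ℝ) * M := by
          apply Finset.sum_le_sum
          intro k _
          by_cases hk : (Finset.univ.filter (fun c : Fin Λ => (c : ℕ) / ω = k)).Nonempty
          · obtain ⟨c0, hc0⟩ := hk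
            simp only [Finset.mem_filter, Finset.mem_univ, true_and] at hc0
            have hc0lt : (c0 : ℕ) < Λ := c0.isLt
            have hkw : k * ω ≤ (c0 : ℕ) := by
              rw [← hc0]; exact Nat.div_mul_le_self _ _
            have hrlt : k * ω + ω - 1 < Λ + ω - 1 := by omega
            set r : Fin (Λ + ω - 1) := ⟨k * ω + ω - 1, hrlt⟩ with hr
            have hsub : ∑ c ∈ Finset.univ.filter (fun c : Fin Λ => (c : ℕ) / ω = k), ψ c
                ≤ (ω : ℝ) * xbar r := by
              rw [hxbar]
              rw [Finset.mul_sum]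
              rw [← Finset.sum_filter_add_sum_filter_not Finset.univ
                (fun c : Fin Λ => (c : ℕ) / ω = k) (fun c => (ω : ℝ) * (W r c * ψ c))]
              have h2 : 0 ≤ ∑ c ∈ Finset.univ.filter (fun c : Fin Λ => ¬ (c : ℕ) / ω = k),
                  (ω : ℝ) * (W r c * ψ c) := by
                apply Finset.sum_nonneg
                intro c _
                exact mul_nonneg hω0.le (mul_nonneg (hWnn r c) (hψ c))
              have h1 : ∑ c ∈ Finset.univ.filter (fun c : Fin Λ => (c : ℕ) / ω = k), ψ c
                  = ∑ c ∈ Finset.univ.filter (fun c : Fin Λ => (c : ℕ) / ω = k),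
                      (ω : ℝ) * (W r c * ψ c) := by
                apply Finset.sum_congr rfl
                intro c hc
                simp only [Finset.mem_filter, Finset.mem_univ, true_and] at hc
                have h1 : k * ω ≤ (c : ℕ) := by
                  rw [← hc]; exact Nat.div_mul_le_self _ _
                have h2 : (c : ℕ) < k * ω + ω := by
                  rw [← hc]; exact Nat.lt_div_mul_add (by omega)
                have hb1 : (c : ℕ) ≤ k * ω + ω - 1 := by omega
                have hb2 : k * ω + ω - 1 < (c : ℕ) + ω := by omega
                have hband : (c : ℕ) ≤ (r : ℕ) ∧ (r : ℕ) < (c : ℕ) + ω := ⟨hb1, hb2⟩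
                rw [hW, if_pos hband]
                field_simp
              rw [h1]
              linarith
            calc ∑ c ∈ Finset.univ.filter (fun c : Fin Λ => (c : ℕ) / ω = k), ψ c
                ≤ (ω : ℝ) * xbar r := hsub
              _ ≤ (ω : ℝ) * M := by
                  apply mul_le_mul_of_nonneg_left (hxM r) hω0.le
          · rw [Finset.not_nonempty_iff_eq_empty] at hk
            rw [hk, Finset.sum_empty]
            positivity
      _ = (N : ℝ) * ((ω : ℝ) * M) := by
          rw [Finset.sum_const, Finset.card_range, nsmul_eq_mul]
  rw [div_mul_eq_mul_div, one_mul, div_le_iff₀ hΛ0]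
  calc ∑ c, ψ c ≤ (N : ℝ) * ((ω : ℝ) * M) := key
    _ = (N : ℝ) * ((ω : ℝ) / (Λ : ℝ)) * M * (Λ : ℝ) := by
        field_simp
end

section
/- Let τ > 0, let P be a square-integrable real random variable, G ~ N(0, τ) independent of P, Z = P + G, and Y = Z². Then almost surely on {Y > 0}, E{Z | P, Y} = √Y · tanh(P√Y / τ). -/
open MeasureTheory ProbabilityTheory Real
open scoped NNReal ENNReal

lemma aux_abs_tanh_le_one (x : ℝ) : |Real.tanh x| ≤ 1 := by
  rw [Real.tanh_eq_sinh_div_cosh, abs_div, abs_of_pos (Real.cosh_pos x),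
    div_le_one (Real.cosh_pos x), abs_le]
  constructor
  · have h := Real.sinh_lt_cosh (x := -x)
    rw [Real.sinh_neg, Real.cosh_neg] at h; linarith
  · exact (Real.sinh_lt_cosh x).le

lemma aux_one_add_tanh (x : ℝ) : 1 + Real.tanh x = Real.exp x / Real.cosh x := by
  rw [Real.tanh_eq_sinh_div_cosh, ← Real.cosh_add_sinh]
  field_simp

lemma aux_one_sub_tanh (x : ℝ) : 1 - Real.tanh x = Real.exp (-x) / Real.cosh x := by
  rw [Real.tanh_eq_sinh_div_cosh, ← Real.cosh_sub_sinh]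
  field_simp

lemma aux_gauss_odd_key {τ : ℝ} (hτ : 0 < τ) (p z : ℝ) :
    Real.exp (-(-z - p)^2/(2*τ)) * (1 + Real.tanh (p*z/τ))
      = Real.exp (-(z - p)^2/(2*τ)) * (1 - Real.tanh (p*z/τ)) := by
  rw [aux_one_add_tanh, aux_one_sub_tanh]
  have hnum : Real.exp (-(-z - p)^2/(2*τ)) * Real.exp (p*z/τ)
      = Real.exp (-(z - p)^2/(2*τ)) * Real.exp (-(p*z/τ)) := by
    rw [← Real.exp_add, ← Real.exp_add]
    congr 1
    field_simp
    ring
  rw [mul_div_assoc', mul_div_assoc', hnum]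

set_option maxHeartbeats 1000000 in
/-- Let `τ > 0`, `P` square-integrable, `G ~ N(0, τ)` independent of `P`,
`Z = P + G`, `Y = Z²`.  Then almost surely on `{Y > 0}`,
`E{Z | P, Y} = √Y · tanh(P √Y / τ)`. -/
theorem stmt_15
    {Ω : Type*} [MeasureSpace Ω] [IsProbabilityMeasure (ℙ : Measure Ω)]
    (τ : ℝ) (hτ : 0 < τ)
    (P G : Ω → ℝ)
    (hPmeas : Measurable P) (hGmeas : Measurable G)
    (hPsq : MemLp P 2 ℙ)
    (hGgauss : Measure.map G ℙ = gaussianReal 0 τ.toNNReal)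
    (hPG : IndepFun P G ℙ)
    (Z Y : Ω → ℝ)
    (hZ : Z = fun ω => P ω + G ω)
    (hY : Y = fun ω => (Z ω) ^ 2)
    (mPY : MeasurableSpace Ω)
    (hmPY : mPY = MeasurableSpace.comap (fun ω => (P ω, Y ω)) inferInstance) :
    ∀ᵐ ω ∂ℙ, 0 < Y ω →
      (condExp mPY ℙ Z) ω =
        Real.sqrt (Y ω) * Real.tanh (P ω * Real.sqrt (Y ω) / τ) := by
  subst hmPY
  have hτ' : ((τ.toNNReal : ℝ≥0) : ℝ) = τ := Real.coe_toNNReal _ hτ.le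
  have hvne : τ.toNNReal ≠ 0 := by
    simp only [ne_eq, Real.toNNReal_eq_zero, not_le]
    exact hτ
  have htanhc : Continuous Real.tanh := by
    have h : Real.tanh = fun x => Real.sinh x / Real.cosh x :=
      funext fun x => Real.tanh_eq_sinh_div_cosh x
    rw [h]
    exact Real.continuous_sinh.div Real.continuous_cosh fun x => (Real.cosh_pos x).ne'
  have htanh : Measurable Real.tanh := htanhc.measurable
  have hZmeas : Measurable[MeasureSpace.toMeasurableSpace] Z := by rw [hZ]; exact hPmeas.add hGmeas
  have hYmeas : Measurable[MeasureSpace.toMeasurableSpace] Y := by rw [hY]; exact hZmeas.pow_const 2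
  set φ : Ω → ℝ × ℝ := fun ω => (P ω, Y ω) with hφ
  have hφmeas : Measurable[MeasureSpace.toMeasurableSpace] φ := hPmeas.prodMk hYmeas
  have hle : MeasurableSpace.comap φ inferInstance ≤
      (MeasureSpace.toMeasurableSpace : MeasurableSpace Ω) :=
    measurable_iff_comap_le.mp hφmeas
  haveI : SigmaFinite (Measure.trim ℙ hle) := by infer_instance
  -- integrability of Z
  have hPint : Integrable P ℙ := hPsq.integrable one_le_two
  have hGint : Integrable G ℙ := by
    have hid : Integrable (id : ℝ → ℝ) (gaussianReal 0 τ.toNNReal) := by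
      rw [gaussianReal_of_var_ne_zero _ hvne]
      have hwd : volume.withDensity (gaussianPDF 0 τ.toNNReal)
          = volume.withDensity (fun x => ((gaussianPDFReal 0 τ.toNNReal x).toNNReal : ENNReal)) :=
        rfl
      rw [hwd, integrable_withDensity_iff_integrable_smul
        (measurable_gaussianPDFReal 0 τ.toNNReal).real_toNNReal]
      have heq : (fun x : ℝ => (gaussianPDFReal 0 τ.toNNReal x).toNNReal • (id x : ℝ))
          = fun x : ℝ => (√(2 * π * τ))⁻¹ * (x * Real.exp (-(1/(2*τ)) * x^2)) := by
        funext x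
        rw [NNReal.smul_def, Real.coe_toNNReal _ (gaussianPDFReal_nonneg _ _ _)]
        simp only [gaussianPDFReal, hτ', smul_eq_mul, id_eq]
        rw [show -(x - 0)^2/(2*τ) = -(1/(2*τ)) * x^2 by field_simp; ring]
        ring
      rw [heq]
      exact (integrable_mul_exp_neg_mul_sq (by positivity : (0:ℝ) < 1/(2*τ))).const_mul _
    have h2 := (integrable_map_measure aestronglyMeasurable_id hGmeas.aemeasurable).mp
      (by rw [hGgauss]; exact hid)
    exact h2
  have hZint : Integrable Z ℙ := by rw [hZ]; exact hPint.add hGint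
  -- the candidate
  set W : Ω → ℝ := fun ω => Real.sqrt (Y ω) * Real.tanh (P ω * Real.sqrt (Y ω) / τ) with hW
  have hWeq : ∀ ω, W ω = Z ω * Real.tanh (P ω * Z ω / τ) := by
    intro ω
    have hYx : Y ω = (Z ω)^2 := by rw [hY]
    rcases le_or_gt 0 (Z ω) with h | h
    · rw [hW]; simp only [hYx, Real.sqrt_sq h]
    · have h2 : Real.sqrt (Y ω) = -Z ω := by
        rw [hYx, show (Z ω)^2 = (-Z ω)^2 by ring, Real.sqrt_sq (by linarith)]
      rw [hW]; simp only [h2]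
      rw [show P ω * -Z ω / τ = -(P ω * Z ω / τ) by ring, Real.tanh_neg]
      ring
  have hWmeas : Measurable[MeasureSpace.toMeasurableSpace] W :=
    (hYmeas.sqrt).mul (htanh.comp ((hPmeas.mul hYmeas.sqrt).div_const τ))
  have hWint : Integrable W ℙ := by
    refine hZint.mono hWmeas.aestronglyMeasurable (ae_of_all _ fun ω => ?_)
    rw [hWeq ω]
    rw [Real.norm_eq_abs, Real.norm_eq_abs, abs_mul]
    have h1 := aux_abs_tanh_le_one (P ω * Z ω / τ)
    have h2 := abs_nonneg (Z ω)
    nlinarith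
  -- W is mPY-strongly measurable
  have hφm' : Measurable[MeasurableSpace.comap φ inferInstance] φ :=
    measurable_iff_comap_le.mpr le_rfl
  have hFmeas : Measurable (fun q : ℝ × ℝ => Real.sqrt q.2 * Real.tanh (q.1 * Real.sqrt q.2 / τ)) :=
    (measurable_snd.sqrt).mul (htanh.comp ((measurable_fst.mul measurable_snd.sqrt).div_const τ))
  have hWmble : Measurable[MeasurableSpace.comap φ inferInstance] W := hFmeas.comp hφm'
  have hWm : AEStronglyMeasurable[MeasurableSpace.comap φ inferInstance] W ℙ :=
    StronglyMeasurable.aestronglyMeasurable hWmble.stronglyMeasurable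
  -- set integral equality
  have hset : ∀ s : Set Ω, MeasurableSet[MeasurableSpace.comap φ inferInstance] s → ℙ s < ∞ →
      ∫ x in s, W x ∂ℙ = ∫ x in s, Z x ∂ℙ := by
    intro s hs _
    obtain ⟨t, ht, hts⟩ := hs
    set k : ℝ × ℝ → ℝ := fun q =>
      Set.indicator t (fun _ => (1:ℝ)) (q.1, q.2^2) * (q.2 - q.2 * Real.tanh (q.1 * q.2 / τ))
      with hk
    have hkmeas : Measurable k := by
      refine Measurable.mul ?_ ?_
      · exact (measurable_const.indicator ht).comp
          (measurable_fst.prodMk (measurable_snd.pow_const 2))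
      · exact measurable_snd.sub (measurable_snd.mul
          (htanh.comp ((measurable_fst.mul measurable_snd).div_const τ)))
    have hkbound : ∀ q : ℝ × ℝ, |k q| ≤ 2 * |q.2| := by
      intro q
      rw [hk]
      simp only
      rw [abs_mul]
      have h1 : |Set.indicator t (fun _ => (1:ℝ)) (q.1, q.2^2)| ≤ 1 := by
        by_cases h : (q.1, q.2^2) ∈ t <;> simp [h]
      have h2 : |q.2 - q.2 * Real.tanh (q.1*q.2/τ)| ≤ 2*|q.2| := by
        have hle2 : |q.2 - q.2 * Real.tanh (q.1*q.2/τ)|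
            ≤ |q.2| + |q.2 * Real.tanh (q.1*q.2/τ)| := abs_sub _ _
        have h3 : |q.2 * Real.tanh (q.1*q.2/τ)| = |q.2| * |Real.tanh (q.1*q.2/τ)| := abs_mul _ _
        have h4 := aux_abs_tanh_le_one (q.1*q.2/τ)
        have h5 := abs_nonneg q.2
        nlinarith
      have h6 := abs_nonneg (q.2 - q.2 * Real.tanh (q.1*q.2/τ))
      nlinarith
    have hpt : ∀ x, Set.indicator s (fun x => Z x - W x) x = k (P x, Z x) := by
      intro x
      have hYx : Y x = (Z x)^2 := by rw [hY]
      rw [hk]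
      simp only
      by_cases hmem : (P x, (Z x)^2) ∈ t
      · have hxs : x ∈ s := by
          rw [← hts]; show φ x ∈ t; rw [hφ]; simp only; rw [hYx]; exact hmem
        rw [Set.indicator_of_mem hxs, Set.indicator_of_mem hmem]
        rw [hWeq x]; ring
      · have hxs : x ∉ s := by
          rw [← hts]; show φ x ∉ t; rw [hφ]; simp only; rw [hYx]; exact hmem
        rw [Set.indicator_of_notMem hxs, Set.indicator_of_notMem hmem]
        ring
    have hcomp_meas : Measurable[MeasureSpace.toMeasurableSpace] fun x => k (P x, Z x) :=
      hkmeas.comp (hPmeas.prodMk hZmeas)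
    have hcomp_int : Integrable (fun x => k (P x, Z x)) ℙ := by
      refine Integrable.mono' ((hZint.abs).const_mul 2) hcomp_meas.aestronglyMeasurable
        (ae_of_all _ fun x => ?_)
      have := hkbound (P x, Z x)
      simpa [Real.norm_eq_abs] using this
    -- the key zero integral
    have hPZ : (fun x => k (P x, Z x)) = fun x => k (P x, P x + G x) := by
      funext x; rw [hZ]
    have hκ : Measurable fun q : ℝ × ℝ => k (q.1, q.1 + q.2) :=
      hkmeas.comp (measurable_fst.prodMk (measurable_fst.add measurable_snd))
    have hmap : Measure.map (fun ω => (P ω, G ω)) ℙ = (Measure.map P ℙ).prod (Measure.map G ℙ) :=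
      (indepFun_iff_map_prod_eq_prod_map_map hPmeas.aemeasurable hGmeas.aemeasurable).mp hPG
    have hint_map : Integrable (fun q : ℝ × ℝ => k (q.1, q.1 + q.2))
        ((Measure.map P ℙ).prod (Measure.map G ℙ)) := by
      rw [← hmap]
      refine (integrable_map_measure hκ.aestronglyMeasurable
        (hPmeas.prodMk hGmeas).aemeasurable).mpr ?_
      have h := hcomp_int
      rw [hPZ] at h
      exact h
    have hstep : ∫ x, k (P x, Z x) ∂ℙ
        = ∫ q : ℝ × ℝ, k (q.1, q.1 + q.2) ∂((Measure.map P ℙ).prod (Measure.map G ℙ)) := by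
      rw [hPZ, ← hmap, integral_map (hPmeas.prodMk hGmeas).aemeasurable hκ.aestronglyMeasurable]
    have hinner : ∀ p : ℝ, ∫ g, k (p, p + g) ∂(Measure.map G ℙ) = 0 := by
      intro p
      rw [hGgauss]
      have hmapadd : Measure.map (fun g : ℝ => g + p) (gaussianReal 0 τ.toNNReal)
          = gaussianReal p τ.toNNReal := by
        have h := gaussianReal_map_add_const (μ := 0) (v := τ.toNNReal) p
        simpa using h
      have hkp : Measurable fun z : ℝ => k (p, z) :=
        hkmeas.comp (measurable_const.prodMk measurable_id)
      have h4 : ∫ g, k (p, p + g) ∂(gaussianReal 0 τ.toNNReal)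
          = ∫ z, k (p, z) ∂(gaussianReal p τ.toNNReal) := by
        rw [← hmapadd, integral_map (measurable_add_const p).aemeasurable
          hkp.aestronglyMeasurable]
        congr 1
        funext g
        rw [add_comm]
      rw [h4, gaussianReal_of_var_ne_zero _ hvne]
      have hwd : volume.withDensity (gaussianPDF p τ.toNNReal)
          = volume.withDensity (fun x => ((gaussianPDFReal p τ.toNNReal x).toNNReal : ENNReal)) :=
        rfl
      rw [hwd, integral_withDensity_eq_integral_smul
        (measurable_gaussianPDFReal p τ.toNNReal).real_toNNReal]
      set h : ℝ → ℝ := fun x => gaussianPDFReal p τ.toNNReal x * k (p, x) with hh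
      have hsmul : (fun x => (gaussianPDFReal p τ.toNNReal x).toNNReal • k (p, x)) = h := by
        funext x
        rw [hh, NNReal.smul_def, Real.coe_toNNReal _ (gaussianPDFReal_nonneg _ _ _)]
        simp [smul_eq_mul]
      rw [hsmul]
      have hodd : ∀ x, h (-x) = - h x := by
        intro x
        rw [hh]
        simp only
        rw [hk]
        simp only [neg_sq]
        rw [show p * -x / τ = -(p*x/τ) by ring, Real.tanh_neg]
        have hkey := aux_gauss_odd_key hτ p x
        simp only [gaussianPDFReal, hτ']
        set c := (√(2 * π * τ))⁻¹ with hc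
        set ind := Set.indicator t (fun _ => (1:ℝ)) (p, x^2) with hind
        linear_combination (-(c * ind * x)) * hkey
      have hneg : ∫ x, h (-x) ∂(volume : Measure ℝ) = ∫ x, h x ∂(volume : Measure ℝ) :=
        MeasurePreserving.integral_comp (Measure.measurePreserving_neg _)
          (MeasurableEquiv.neg ℝ).measurableEmbedding h
      have hz : ∫ x, h x ∂(volume : Measure ℝ) = - ∫ x, h x ∂(volume : Measure ℝ) := by
        conv_lhs => rw [← hneg]
        simp_rw [hodd]
        rw [integral_neg]
      linarith
    have hzero : ∫ x, k (P x, Z x) ∂ℙ = 0 := by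
      rw [hstep, MeasureTheory.integral_prod _ hint_map]
      have : ∀ p : ℝ, ∫ g, k ((p, g).1, (p, g).1 + (p, g).2) ∂(Measure.map G ℙ) = 0 := by
        intro p; exact hinner p
      rw [integral_congr_ae (ae_of_all _ this)]
      simp
    -- conclude the set integral equality
    have hsm : MeasurableSet[MeasureSpace.toMeasurableSpace] s := hle s ⟨t, ht, hts⟩
    have h1 : ∫ x in s, (Z x - W x) ∂ℙ = ∫ x, k (P x, Z x) ∂ℙ := by
      rw [← integral_indicator hsm]
      exact integral_congr_ae (ae_of_all _ hpt)
    have h2 : ∫ x in s, (Z x - W x) ∂ℙ = ∫ x in s, Z x ∂ℙ - ∫ x in s, W x ∂ℙ :=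
      integral_sub hZint.integrableOn hWint.integrableOn
    rw [h1, hzero] at h2
    linarith
  have hcond :=
    ae_eq_condExp_of_forall_setIntegral_eq hle hZint
      (fun s _ _ => hWint.integrableOn) hset hWm
  filter_upwards [hcond] with ω hω _
  rw [← hω]
end

section
/- Let τ > 0, let P be a square-integrable real random variable, G ~ N(0, τ) independent of P, Z = P + G, and Y = max(Z, 0). Then almost surely: on the event {Y = 0}, E{Z | P, Y} = P − √τ · φ(P/√τ)/Φ(−P/√τ), and on the event {Y > 0}, E{Z | P, Y} = Y, where φ and Φ denote the standard normal density and distribution functions. -/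
open MeasureTheory ProbabilityTheory

/-- The standard normal density. -/
noncomputable def stdNormalPDF (x : ℝ) : ℝ :=
  (Real.sqrt (2 * Real.pi))⁻¹ * Real.exp (-x ^ 2 / 2)

/-- The standard normal distribution function. -/
noncomputable def stdNormalCDF (x : ℝ) : ℝ :=
  ((ProbabilityTheory.gaussianReal 0 1) (Set.Iic x)).toReal

open Real Set Filter
open scoped ENNReal NNReal Topology

lemma stdNormalPDF_nonneg (x : ℝ) : 0 ≤ stdNormalPDF x := by
  unfold stdNormalPDF; positivity

lemma stdNormalPDF_neg (x : ℝ) : stdNormalPDF (-x) = stdNormalPDF x := by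
  simp [stdNormalPDF]

lemma stdNormalPDF_le (x : ℝ) : stdNormalPDF x ≤ (Real.sqrt (2 * Real.pi))⁻¹ := by
  unfold stdNormalPDF
  have h1 : Real.exp (-x ^ 2 / 2) ≤ 1 := by
    rw [Real.exp_le_one_iff]; nlinarith [sq_nonneg x]
  nlinarith [Real.sqrt_nonneg (2 * Real.pi), inv_nonneg.mpr (Real.sqrt_nonneg (2 * Real.pi)), h1]

lemma stdNormalCDF_mono : Monotone stdNormalCDF := by
  intro a b hab
  exact ENNReal.toReal_mono (measure_ne_top _ _) (measure_mono (Set.Iic_subset_Iic.mpr hab))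

lemma measurable_stdNormalCDF : Measurable stdNormalCDF := stdNormalCDF_mono.measurable

lemma stdNormalCDF_pos (x : ℝ) : 0 < stdNormalCDF x := by
  unfold stdNormalCDF
  rw [gaussianReal_apply_eq_integral 0 one_ne_zero]
  rw [ENNReal.toReal_ofReal]
  · apply (setIntegral_pos_iff_support_of_nonneg_ae ?_ ?_).mpr
    · have : Function.support (gaussianPDFReal 0 1) = Set.univ := by
        ext y; simp [Function.mem_support, (gaussianPDFReal_pos 0 1 y one_ne_zero).ne']
      rw [this, Set.univ_inter]
      simp [Real.volume_Iic]
    · exact ae_of_all _ fun y => gaussianPDFReal_nonneg 0 1 y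
    · exact (integrable_gaussianPDFReal 0 1).restrict
  · exact setIntegral_nonneg measurableSet_Iic fun y _ => gaussianPDFReal_nonneg 0 1 y

section gauss
variable {τ : ℝ}

lemma tau_nnreal_ne_zero (hτ : 0 < τ) : τ.toNNReal ≠ 0 :=
  (Real.toNNReal_pos.mpr hτ).ne'

lemma gauss_map (hτ : 0 < τ) :
    (gaussianReal 0 1).map (fun x => Real.sqrt τ * x) = gaussianReal 0 τ.toNNReal := by
  rw [show (fun x => Real.sqrt τ * x) = (Real.sqrt τ * ·) from rfl, gaussianReal_map_const_mul]
  congr 1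
  · simp
  · ext
    simp [Real.sq_sqrt hτ.le, Real.coe_toNNReal _ hτ.le]

lemma gauss_Iic (hτ : 0 < τ) (c : ℝ) :
    ((gaussianReal 0 τ.toNNReal) (Set.Iic c)).toReal = stdNormalCDF (c / Real.sqrt τ) := by
  have hσ : 0 < Real.sqrt τ := Real.sqrt_pos.mpr hτ
  rw [← gauss_map hτ, Measure.map_apply (measurable_const_mul _) measurableSet_Iic]
  rw [Set.preimage_const_mul_Iic₀ c hσ]
  rfl

lemma gauss_pdf_eq (hτ : 0 < τ) (x : ℝ) :
    gaussianPDFReal 0 τ.toNNReal x = (Real.sqrt (2 * Real.pi * τ))⁻¹ * Real.exp (-x ^ 2 / (2 * τ)) := by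
  simp [gaussianPDFReal, Real.coe_toNNReal _ hτ.le]

lemma gauss_setIntegral (hτ : 0 < τ) (f : ℝ → ℝ) {s : Set ℝ} (hs : MeasurableSet s) :
    ∫ x in s, f x ∂(gaussianReal 0 τ.toNNReal)
      = ∫ x in s, gaussianPDFReal 0 τ.toNNReal x * f x := by
  rw [gaussianReal_of_var_ne_zero _ (tau_nnreal_ne_zero hτ), gaussianPDF_def]
  rw [show (fun x => ENNReal.ofReal (gaussianPDFReal 0 τ.toNNReal x))
      = (fun x => ((gaussianPDFReal 0 τ.toNNReal x).toNNReal : ℝ≥0∞)) from rfl]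
  rw [setIntegral_withDensity_eq_setIntegral_smul
    ((measurable_gaussianPDFReal 0 τ.toNNReal).real_toNNReal) f hs]
  refine setIntegral_congr_fun hs fun x _ => ?_
  rw [NNReal.smul_def, smul_eq_mul, Real.coe_toNNReal _ (gaussianPDFReal_nonneg 0 τ.toNNReal x)]

lemma gauss_integral (hτ : 0 < τ) (f : ℝ → ℝ) :
    ∫ x, f x ∂(gaussianReal 0 τ.toNNReal)
      = ∫ x, gaussianPDFReal 0 τ.toNNReal x * f x := by
  have := gauss_setIntegral hτ f MeasurableSet.univ
  simpa using this

end gauss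

section gauss2
variable {τ : ℝ}

lemma gauss_integral_Iic_id (hτ : 0 < τ) (c : ℝ) :
    ∫ x in Set.Iic c, x ∂(gaussianReal 0 τ.toNNReal)
      = -(Real.sqrt τ * stdNormalPDF (c / Real.sqrt τ)) := by
  have hσ : 0 < Real.sqrt τ := Real.sqrt_pos.mpr hτ
  rw [gauss_setIntegral hτ _ measurableSet_Iic]
  have hpdf : ∀ x : ℝ, gaussianPDFReal 0 τ.toNNReal x * x
      = (Real.sqrt (2 * Real.pi * τ))⁻¹ * Real.exp (-x^2/(2*τ)) * x := by
    intro x; rw [gauss_pdf_eq hτ]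
  simp_rw [hpdf]
  set k := (Real.sqrt (2 * Real.pi * τ))⁻¹ with hk
  have href : (∫ x in Set.Iic c, k * Real.exp (-x^2/(2*τ)) * x)
      = ∫ x in Set.Ioi (-c), k * Real.exp (-x^2/(2*τ)) * (-x) := by
    rw [← integral_comp_neg_Iic c (fun x => k * Real.exp (-x^2/(2*τ)) * (-x))]
    refine setIntegral_congr_fun measurableSet_Iic fun x _ => ?_
    simp [neg_sq]
  rw [href]
  have key : (∫ x in Set.Ioi (-c), k * Real.exp (-x^2/(2*τ)) * (-x))
      = -(τ * k * Real.exp (-c^2/(2*τ))) := by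
    have hb : (0:ℝ) < (2*τ)⁻¹ := by positivity
    have hd : ∀ x ∈ Set.Ici (-c),
        HasDerivAt (fun x : ℝ => τ * k * Real.exp (-x^2/(2*τ)))
          (k * Real.exp (-x^2/(2*τ)) * (-x)) x := by
      intro x _
      have h1 : HasDerivAt (fun x : ℝ => -x^2/(2*τ)) (-x/τ) x := by
        have h := ((hasDerivAt_pow 2 x).neg.div_const (2*τ))
        refine h.congr_deriv ?_
        field_simp
        ring
      have h2 := (h1.exp).const_mul (τ * k)
      refine h2.congr_deriv ?_
      field_simp
    have hint : IntegrableOn (fun x => k * Real.exp (-x^2/(2*τ)) * (-x)) (Set.Ioi (-c)) := by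
      have h := (integrable_mul_exp_neg_mul_sq hb).const_mul (-k)
      have heq : (fun x => -k * (x * Real.exp (-(2*τ)⁻¹ * x^2)))
          = fun x => k * Real.exp (-x^2/(2*τ)) * (-x) := by
        ext x
        rw [show -(2*τ)⁻¹ * x^2 = -x^2/(2*τ) by field_simp]
        ring
      rw [heq] at h
      exact h.integrableOn
    have htend : Tendsto (fun x : ℝ => τ * k * Real.exp (-x^2/(2*τ))) atTop (𝓝 0) := by
      have h1 : Tendsto (fun x : ℝ => -x^2/(2*τ)) atTop atBot := by
        apply Tendsto.atBot_div_const (by positivity)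
        exact tendsto_neg_atTop_atBot.comp (tendsto_pow_atTop two_ne_zero)
      have h2 := Real.tendsto_exp_atBot.comp h1
      have h3 := h2.const_mul (τ * k)
      simpa using h3
    have := integral_Ioi_of_hasDerivAt_of_tendsto' hd hint htend
    rw [this]
    simp [neg_sq]
  rw [key]
  have hexp : -(c / Real.sqrt τ)^2/2 = -c^2/(2*τ) := by
    rw [div_pow, Real.sq_sqrt hτ.le]
    field_simp
  rw [stdNormalPDF, hexp, hk]
  have h2πτ : Real.sqrt (2 * Real.pi * τ) = Real.sqrt (2 * Real.pi) * Real.sqrt τ :=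
    Real.sqrt_mul (by positivity) τ
  have hττ : Real.sqrt τ * Real.sqrt τ = τ := Real.mul_self_sqrt hτ.le
  have h2π : (0:ℝ) < Real.sqrt (2 * Real.pi) := Real.sqrt_pos.mpr (by positivity)
  rw [h2πτ]
  have hfac : τ * (Real.sqrt (2 * Real.pi) * Real.sqrt τ)⁻¹
      = Real.sqrt τ * (Real.sqrt (2 * Real.pi))⁻¹ := by
    rw [mul_inv, ← hττ]
    field_simp
    rw [Real.sqrt_sq (Real.sqrt_nonneg τ)]
  rw [hfac]
  ring

lemma gauss_integrable_id (hτ : 0 < τ) :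
    Integrable (fun x : ℝ => x) (gaussianReal 0 τ.toNNReal) := by
  rw [gaussianReal_of_var_ne_zero _ (tau_nnreal_ne_zero hτ)]
  rw [integrable_withDensity_iff_integrable_smul' (measurable_gaussianPDF _ _)
    (Filter.Eventually.of_forall fun x => ENNReal.ofReal_lt_top)]
  have heq : (fun x : ℝ => (gaussianPDF 0 τ.toNNReal x).toReal • x)
      = fun x => ((Real.sqrt (2*Real.pi*τ))⁻¹) * (x * Real.exp (-(2*τ)⁻¹ * x^2)) := by
    ext x
    rw [gaussianPDF, ENNReal.toReal_ofReal (gaussianPDFReal_nonneg _ _ _), gauss_pdf_eq hτ,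
      smul_eq_mul]
    rw [show -(2*τ)⁻¹ * x^2 = -x^2/(2*τ) by field_simp]
    ring
  rw [heq]
  exact ((integrable_mul_exp_neg_mul_sq (by positivity)).const_mul _)

end gauss2

noncomputable def hfun (τ p : ℝ) : ℝ :=
  p - Real.sqrt τ * (stdNormalPDF (p / Real.sqrt τ) / stdNormalCDF (-p / Real.sqrt τ))

lemma continuous_stdNormalPDF : Continuous stdNormalPDF := by
  unfold stdNormalPDF
  fun_prop

lemma measurable_hfun (τ : ℝ) : Measurable (hfun τ) := by
  unfold hfun
  exact measurable_id.sub (measurable_const.mul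
    (((continuous_stdNormalPDF.measurable.comp (measurable_id.div_const _))).div
      (measurable_stdNormalCDF.comp (measurable_id.neg.div_const _))))

noncomputable def Dfun (τ : ℝ) (q : ℝ × ℝ) : ℝ :=
  if q.2 ≤ -q.1 then hfun τ q.1 - q.1 - q.2 else 0

lemma measurable_Dfun (τ : ℝ) : Measurable (Dfun τ) := by
  unfold Dfun
  exact Measurable.ite (measurableSet_le measurable_snd measurable_fst.neg)
    ((((measurable_hfun τ).comp measurable_fst).sub measurable_fst).sub measurable_snd)
    measurable_const

lemma Dfun_section (τ p : ℝ) :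
    (fun g => Dfun τ (p, g)) = Set.indicator (Set.Iic (-p)) (fun g => hfun τ p - p - g) := by
  ext g
  rw [Set.indicator_apply]
  simp [Dfun, Set.mem_Iic]

section key
variable {τ : ℝ}

lemma inner_zero (hτ : 0 < τ) (p : ℝ) :
    ∫ g in Set.Iic (-p), (hfun τ p - p - g) ∂(gaussianReal 0 τ.toNNReal) = 0 := by
  have hΦ : 0 < stdNormalCDF (-p / Real.sqrt τ) := stdNormalCDF_pos _
  rw [integral_sub (integrable_const _) ((gauss_integrable_id hτ).integrableOn)]
  rw [setIntegral_const, measureReal_def, gauss_integral_Iic_id hτ, gauss_Iic hτ, smul_eq_mul]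
  have hneg : -p / Real.sqrt τ = -(p / Real.sqrt τ) := by ring
  rw [hneg, stdNormalPDF_neg]
  unfold hfun
  rw [← hneg]
  field_simp
  have hΦ' : stdNormalCDF (-(p / Real.sqrt τ)) ≠ 0 := by rw [← hneg]; exact hΦ.ne'
  field_simp
  ring

lemma integral_Dfun_section (hτ : 0 < τ) (p : ℝ) :
    ∫ g, Dfun τ (p, g) ∂(gaussianReal 0 τ.toNNReal) = 0 := by
  rw [Dfun_section, integral_indicator measurableSet_Iic, inner_zero hτ p]

lemma integrable_Dfun (hτ : 0 < τ) (μ : Measure ℝ) [IsProbabilityMeasure μ] :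
    Integrable (Dfun τ) (μ.prod (gaussianReal 0 τ.toNNReal)) := by
  set ν := gaussianReal 0 τ.toNNReal with hν
  have hidint : Integrable (fun x : ℝ => x) ν := gauss_integrable_id hτ
  set M := ∫ x, ‖x‖ ∂ν with hM
  have hsm : AEStronglyMeasurable (Dfun τ) (μ.prod ν) :=
    (measurable_Dfun τ).aestronglyMeasurable
  rw [integrable_prod_iff hsm]
  constructor
  · refine Filter.Eventually.of_forall fun p => ?_
    rw [Dfun_section]
    exact (((integrable_const _).sub hidint)).indicator measurableSet_Iic
  · have hbound : ∀ p : ℝ, (∫ g, ‖Dfun τ (p, g)‖ ∂ν)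
        ≤ Real.sqrt τ * (Real.sqrt (2 * Real.pi))⁻¹ + M := by
      intro p
      have hΦ : 0 < stdNormalCDF (-p / Real.sqrt τ) := stdNormalCDF_pos _
      have h1 : (fun g => ‖Dfun τ (p, g)‖)
          = Set.indicator (Set.Iic (-p)) (fun g => ‖hfun τ p - p - g‖) := by
        ext g
        rw [show Dfun τ (p, g) = Set.indicator (Set.Iic (-p)) (fun g => hfun τ p - p - g) g from
          congrFun (Dfun_section τ p) g, norm_indicator_eq_indicator_norm]
      rw [h1, integral_indicator measurableSet_Iic]
      have h2 : (∫ g in Set.Iic (-p), ‖hfun τ p - p - g‖ ∂ν)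
          ≤ ∫ g in Set.Iic (-p), (‖hfun τ p - p‖ + ‖g‖) ∂ν := by
        refine integral_mono ?_ ?_ fun g => norm_sub_le _ _
        · exact (((integrable_const _).sub hidint).norm).integrableOn
        · exact ((integrable_const _).add hidint.norm).integrableOn
      have h3 : (∫ g in Set.Iic (-p), (‖hfun τ p - p‖ + ‖g‖) ∂ν)
          = ‖hfun τ p - p‖ * (ν (Set.Iic (-p))).toReal + ∫ g in Set.Iic (-p), ‖g‖ ∂ν := by
        rw [integral_add (integrable_const _) hidint.norm.integrableOn, setIntegral_const, measureReal_def,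
          smul_eq_mul, mul_comm]
      have h4 : (∫ g in Set.Iic (-p), ‖g‖ ∂ν) ≤ M :=
        setIntegral_le_integral hidint.norm (Filter.Eventually.of_forall fun g => norm_nonneg g)
      have h5 : ‖hfun τ p - p‖ * (ν (Set.Iic (-p))).toReal
          ≤ Real.sqrt τ * (Real.sqrt (2 * Real.pi))⁻¹ := by
        rw [gauss_Iic hτ]
        have h6 : ‖hfun τ p - p‖
            = Real.sqrt τ * (stdNormalPDF (p / Real.sqrt τ) / stdNormalCDF (-p / Real.sqrt τ)) := by
          unfold hfun
          rw [show p - Real.sqrt τ * (stdNormalPDF (p / Real.sqrt τ) /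
              stdNormalCDF (-p / Real.sqrt τ)) - p
            = -(Real.sqrt τ * (stdNormalPDF (p / Real.sqrt τ) /
              stdNormalCDF (-p / Real.sqrt τ))) by ring, norm_neg]
          rw [Real.norm_of_nonneg]
          exact mul_nonneg (Real.sqrt_nonneg τ) (div_nonneg (stdNormalPDF_nonneg _) (stdNormalCDF_pos _).le)
        rw [h6, mul_assoc, div_mul_cancel₀ _ hΦ.ne']
        exact mul_le_mul_of_nonneg_left (stdNormalPDF_le _) (Real.sqrt_nonneg τ)
      linarith
    refine Integrable.mono' (integrable_const (Real.sqrt τ * (Real.sqrt (2 * Real.pi))⁻¹ + M))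
      ?_ ?_
    · exact ((measurable_Dfun τ).stronglyMeasurable.norm).integral_prod_right'.aestronglyMeasurable
    · refine Filter.Eventually.of_forall fun p => ?_
      rw [Real.norm_of_nonneg (integral_nonneg fun g => norm_nonneg _)]
      exact hbound p

end key

/-- Let `τ > 0`, `P` square-integrable, `G ~ N(0, τ)` independent of `P`,
`Z = P + G`, `Y = max(Z, 0)`.  Then almost surely: on `{Y = 0}`,
`E{Z | P, Y} = P − √τ · φ(P/√τ)/Φ(−P/√τ)`, and on `{Y > 0}`, `E{Z | P, Y} = Y`,
where `φ` and `Φ` are the standard normal density and distribution functions. -/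
theorem stmt_16
    {Ω : Type*} [MeasureSpace Ω] [IsProbabilityMeasure (ℙ : Measure Ω)]
    (τ : ℝ) (hτ : 0 < τ)
    (P G : Ω → ℝ)
    (hPmeas : Measurable P) (hGmeas : Measurable G)
    (hPsq : MemLp P 2 ℙ)
    (hGgauss : Measure.map G ℙ = gaussianReal 0 τ.toNNReal)
    (hPG : IndepFun P G ℙ)
    (Z Y : Ω → ℝ)
    (hZ : Z = fun ω => P ω + G ω)
    (hY : Y = fun ω => max (Z ω) 0)
    (mPY : MeasurableSpace Ω)
    (hmPY : mPY = MeasurableSpace.comap (fun ω => (P ω, Y ω)) inferInstance) :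
    ∀ᵐ ω ∂ℙ,
      (Y ω = 0 →
        (condExp mPY ℙ Z) ω =
          P ω - Real.sqrt τ *
            (stdNormalPDF (P ω / Real.sqrt τ) / stdNormalCDF (-(P ω) / Real.sqrt τ))) ∧
      (0 < Y ω → (condExp mPY ℙ Z) ω = Y ω) := by
  subst hmPY
  have hZmeas : Measurable Z := by rw [hZ]; exact hPmeas.add hGmeas
  have hYmeas : Measurable Y := by rw [hY]; exact hZmeas.max measurable_const
  have hφ : Measurable fun ω => (P ω, Y ω) := hPmeas.prodMk hYmeas
  have hm : MeasurableSpace.comap (fun ω => (P ω, Y ω)) inferInstance ≤ _ := hφ.comap_le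
  have hPint : Integrable P ℙ := hPsq.integrable one_le_two
  have hGint : Integrable G ℙ := by
    have h1 : Integrable (fun x : ℝ => x) (Measure.map G ℙ) := by
      rw [hGgauss]; exact gauss_integrable_id hτ
    have := (integrable_map_measure measurable_id.aestronglyMeasurable
      hGmeas.aemeasurable).mp h1
    simpa [Function.comp] using this
  have hZint : Integrable Z ℙ := by rw [hZ]; exact hPint.add hGint
  haveI : IsProbabilityMeasure (Measure.map P ℙ) := Measure.isProbabilityMeasure_map hPmeas.aemeasurable
  have hprod : Measure.map (fun ω => (P ω, G ω)) ℙ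
      = (Measure.map P ℙ).prod (gaussianReal 0 τ.toNNReal) := by
    rw [← hGgauss]
    exact (indepFun_iff_map_prod_eq_prod_map_map hPmeas.aemeasurable hGmeas.aemeasurable).mp hPG
  have hDint : Integrable (Dfun τ) ((Measure.map P ℙ).prod (gaussianReal 0 τ.toNNReal)) :=
    integrable_Dfun hτ _
  have hYalt : ∀ ω, ¬ 0 < Y ω → (Z ω ≤ 0 ∧ Y ω = 0) := by
    intro ω h
    rw [hY] at h ⊢
    push_neg at h
    have hZle : Z ω ≤ 0 := le_trans (le_max_left _ _) h
    exact ⟨hZle, max_eq_right hZle⟩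
  have hDcompeq : ∀ ω, (if 0 < Y ω then Y ω else hfun τ (P ω)) = Z ω + Dfun τ (P ω, G ω) := by
    intro ω
    by_cases h : 0 < Y ω
    · rw [if_pos h]
      have hZpos : 0 < Z ω := by
        rw [hY] at h
        rcases lt_max_iff.mp h with h' | h'
        · exact h'
        · exact absurd h' (lt_irrefl 0)
      have hz : 0 < P ω + G ω := by rw [hZ] at hZpos; exact hZpos
      have hG : ¬ ((P ω, G ω).2 ≤ -(P ω, G ω).1) := by
        simp only [not_le]
        show -(P ω) < G ω
        linarith
      rw [Dfun, if_neg hG, hY]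
      show Z ω ⊔ 0 = Z ω + 0
      rw [max_eq_left hZpos.le]
      ring
    · obtain ⟨hZle, hY0⟩ := hYalt ω h
      rw [if_neg h, Dfun]
      have hz : P ω + G ω ≤ 0 := by rw [hZ] at hZle; exact hZle
      have hG : (P ω, G ω).2 ≤ -(P ω, G ω).1 := by
        show G ω ≤ -(P ω)
        linarith
      rw [if_pos hG, hZ]
      show hfun τ (P ω) = P ω + G ω + (hfun τ (P ω) - P ω - G ω)
      ring
  set g : Ω → ℝ := fun ω => if 0 < Y ω then Y ω else hfun τ (P ω) with hgdef
  have hgeq : g = fun ω => Z ω + Dfun τ (P ω, G ω) := funext hDcompeq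
  have hDcomp : Integrable (fun ω => Dfun τ (P ω, G ω)) ℙ := by
    have h1 : Integrable (Dfun τ) (Measure.map (fun ω => (P ω, G ω)) ℙ) := by
      rw [hprod]; exact hDint
    have := (integrable_map_measure (measurable_Dfun τ).aestronglyMeasurable
      (hPmeas.prodMk hGmeas).aemeasurable).mp h1
    exact this
  have hgint : Integrable g ℙ := by rw [hgeq]; exact hZint.add hDcomp
  have hgm : AEStronglyMeasurable[MeasurableSpace.comap (fun ω => (P ω, Y ω)) inferInstance] g ℙ := by
    refine StronglyMeasurable.aestronglyMeasurable (Measurable.stronglyMeasurable ?_)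
    have hmeas_pair : Measurable[MeasurableSpace.comap (fun ω => (P ω, Y ω)) inferInstance]
        (fun ω => (P ω, Y ω)) := Measurable.of_comap_le le_rfl
    have hgfun : Measurable (fun q : ℝ × ℝ => if 0 < q.2 then q.2 else hfun τ q.1) :=
      Measurable.ite (measurableSet_lt measurable_const measurable_snd) measurable_snd
        ((measurable_hfun τ).comp measurable_fst)
    exact hgfun.comp hmeas_pair
  have hsetint : ∀ s, MeasurableSet[MeasurableSpace.comap (fun ω => (P ω, Y ω)) inferInstance] s
      → ℙ s < ⊤ → ∫ x in s, g x ∂ℙ = ∫ x in s, Z x ∂ℙ := by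
    intro s hs _
    obtain ⟨B, hB, rfl⟩ := MeasurableSpace.measurableSet_comap.mp hs
    have hsmeas : MeasurableSet ((fun ω => (P ω, Y ω)) ⁻¹' B) := hφ hB
    set B' : Set ℝ := (fun p => (p, (0:ℝ))) ⁻¹' B with hB'def
    have hB' : MeasurableSet B' := (measurable_id.prodMk measurable_const) hB
    have hind : ∀ ω, Set.indicator ((fun ω => (P ω, Y ω)) ⁻¹' B) (fun ω => g ω - Z ω) ω
        = Set.indicator (Prod.fst ⁻¹' B') (Dfun τ) (P ω, G ω) := by
      intro ω
      have hgZ : g ω - Z ω = Dfun τ (P ω, G ω) := by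
        rw [hgeq]; ring
      by_cases h : 0 < Y ω
      · have hZpos : 0 < Z ω := by
          rw [hY] at h
          rcases lt_max_iff.mp h with h' | h'
          · exact h'
          · exact absurd h' (lt_irrefl 0)
        have hD0 : Dfun τ (P ω, G ω) = 0 := by
          have hz : 0 < P ω + G ω := by rw [hZ] at hZpos; exact hZpos
          rw [Dfun, if_neg]
          simp only [not_le]
          show -(P ω) < G ω
          linarith
        classical
        rw [Set.indicator_apply, Set.indicator_apply]
        split_ifs
        · rw [hgZ, hD0]
        · rw [hgZ, hD0]
        · rw [hD0]
        · rfl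
      · obtain ⟨hZle, hY0⟩ := hYalt ω h
        have hmem : ω ∈ (fun ω => (P ω, Y ω)) ⁻¹' B ↔ (P ω, G ω) ∈ Prod.fst ⁻¹' B' := by
          simp only [Set.mem_preimage, hY0, hB'def]
        by_cases hmemB : ω ∈ (fun ω => (P ω, Y ω)) ⁻¹' B
        · rw [Set.indicator_of_mem hmemB, Set.indicator_of_mem (hmem.mp hmemB), hgZ]
        · rw [Set.indicator_of_notMem hmemB,
            Set.indicator_of_notMem (fun hc => hmemB (hmem.mpr hc))]
    rw [← sub_eq_zero, ← integral_sub hgint.integrableOn hZint.integrableOn,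
      ← integral_indicator hsmeas]
    rw [show (fun ω => Set.indicator ((fun ω => (P ω, Y ω)) ⁻¹' B) (fun ω => g ω - Z ω) ω)
        = fun ω => Set.indicator (Prod.fst ⁻¹' B') (Dfun τ) (P ω, G ω) from funext hind]
    have hintmap : ∫ ω, Set.indicator (Prod.fst ⁻¹' B') (Dfun τ) (P ω, G ω) ∂ℙ
        = ∫ q, Set.indicator (Prod.fst ⁻¹' B') (Dfun τ) q
            ∂((Measure.map P ℙ).prod (gaussianReal 0 τ.toNNReal)) := by
      rw [← hprod, integral_map (hPmeas.prodMk hGmeas).aemeasurable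
        ((measurable_Dfun τ).indicator (measurable_fst hB')).aestronglyMeasurable]
    rw [hintmap]
    have hDBint : Integrable (Set.indicator (Prod.fst ⁻¹' B') (Dfun τ))
        ((Measure.map P ℙ).prod (gaussianReal 0 τ.toNNReal)) :=
      hDint.indicator (measurable_fst hB')
    rw [integral_prod _ hDBint]
    have hinner : ∀ p : ℝ, (∫ gg, Set.indicator (Prod.fst ⁻¹' B') (Dfun τ) (p, gg)
        ∂(gaussianReal 0 τ.toNNReal)) = 0 := by
      intro p
      by_cases hp : p ∈ B'
      · rw [show (fun gg => Set.indicator (Prod.fst ⁻¹' B') (Dfun τ) (p, gg))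
            = fun gg => Dfun τ (p, gg) from funext fun gg =>
              Set.indicator_of_mem (show (p, gg) ∈ Prod.fst ⁻¹' B' from hp) (Dfun τ)]
        exact integral_Dfun_section hτ p
      · rw [show (fun gg => Set.indicator (Prod.fst ⁻¹' B') (Dfun τ) (p, gg))
            = fun _ => (0:ℝ) from funext fun gg =>
              Set.indicator_of_notMem (show (p, gg) ∉ Prod.fst ⁻¹' B' from hp) (Dfun τ)]
        exact integral_zero _ _
    simp only [hinner, integral_zero]
  have hcond := ae_eq_condExp_of_forall_setIntegral_eq hm hZint
    (fun s _ _ => hgint.integrableOn) hsetint hgm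
  filter_upwards [hcond] with ω hω
  constructor
  · intro hY0
    rw [← hω]
    show (if 0 < Y ω then Y ω else hfun τ (P ω)) = _
    rw [if_neg (by rw [hY0]; exact lt_irrefl 0)]
    rfl
  · intro hYpos
    rw [← hω]
    show (if 0 < Y ω then Y ω else hfun τ (P ω)) = _
    rw [if_pos hYpos]
end
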